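/- Let C₂ = ℤ/2ℤ. Let f : C₂ × ℤ → C₂ × (ℤ * C₂) be the homomorphism that is the identity on the factor C₂ and sends the generator 1 of ℤ to the generator of the free factor ℤ of ℤ * C₂. Then the pushout in the category of groups of two copies of f (i.e., the amalgamated free product (C₂ × (ℤ * C₂)) *_{C₂ × ℤ} (C₂ × (ℤ * C₂)) with both amalgamating maps equal to f) is isomorphic to C₂ × (ℤ * C₂ * C₂). -/

import Mathlib

/-- The cyclic group of order two, written multiplicatively. -/
abbrev C2 : Type := Multiplicative (ZMod 2)

/-- The infinite cyclic group, written multiplicatively. -/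
abbrev Z : Type := Multiplicative ℤ

/-- The two-element family of types with value `B` at `false` and `D` at `true`. -/
def pairFam (B D : Type) : Bool → Type
  | false => B
  | true => D

instance pairFamGroup (B D : Type) [Group B] [Group D] : ∀ b, Group (pairFam B D b)
  | false => inferInstanceAs (Group B)
  | true => inferInstanceAs (Group D)

/-- The pair of homomorphisms `i : C →* B` and `j : C →* D`, as a family indexed by `Bool`;
the group pushout of `i` and `j` (the amalgamated free product `B *_C D`) is
`Monoid.PushoutI (pairHom i j)`. -/
def pairHom {C B D : Type} [Group C] [Group B] [Group D]
    (i : C →* B) (j : C →* D) : ∀ b, C →* pairFam B D b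
  | false => i
  | true => j

/-- The homomorphism `C₂ × ℤ → C₂ × (ℤ * C₂)` which is the identity on the factor `C₂`
and sends the generator `1` of `ℤ` to the generator of the free factor `ℤ` of `ℤ * C₂`. -/
def f : C2 × Z →* C2 × Monoid.Coprod Z C2 :=
  (MonoidHom.id C2).prodMap Monoid.Coprod.inl

/-!
In the amalgam of `K × (A * B)` and `K × (A * D)` over `K × A`, the factor `K` commutes with
`1 × (A * B)` and with `1 × (A * D)`, hence splits off as a direct factor; what remains is the
amalgam of `A * B` and `A * D` over `A`, which is the free product `A * B * D`.
-/

open Monoid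

namespace ProdInlPushout

variable {K A B D : Type} [Group K] [Group A] [Group B] [Group D]

variable (K A B D) in
abbrev diagram : ∀ b, K × A →* pairFam (K × Coprod A B) (K × Coprod A D) b :=
  pairHom ((MonoidHom.id K).prodMap Coprod.inl) ((MonoidHom.id K).prodMap Coprod.inl)

local notation "P" => PushoutI (diagram K A B D)

abbrev ofFalse : K × Coprod A B →* P := PushoutI.of (φ := diagram K A B D) false

abbrev ofTrue : K × Coprod A D →* P := PushoutI.of (φ := diagram K A B D) true

theorem ofFalse_inl (k : K) (a : A) :
    ofFalse (k, Coprod.inl a) = PushoutI.base (diagram K A B D) (k, a) :=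
  PushoutI.of_apply_eq_base _ false (k, a)

theorem ofTrue_inl (k : K) (a : A) :
    ofTrue (k, Coprod.inl a) = PushoutI.base (diagram K A B D) (k, a) :=
  PushoutI.of_apply_eq_base _ true (k, a)

theorem ofFalse_mk (k : K) (x : Coprod A B) :
    ofFalse (k, x) = PushoutI.base (diagram K A B D) (k, 1) * ofFalse (1, x) := by
  rw [← ofFalse_inl, map_one, ← map_mul, Prod.mk_mul_mk, mul_one, one_mul]

theorem ofTrue_mk (k : K) (y : Coprod A D) :
    ofTrue (k, y) = PushoutI.base (diagram K A B D) (k, 1) * ofTrue (1, y) := by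
  rw [← ofTrue_inl, map_one, ← map_mul, Prod.mk_mul_mk, mul_one, one_mul]

theorem commute_base_ofFalse (k : K) (x : Coprod A B) :
    Commute (PushoutI.base (diagram K A B D) (k, 1)) (ofFalse (1, x)) := by
  rw [← ofFalse_inl, map_one]
  exact (MonoidHom.commute_inl_inr k x).map ofFalse

theorem commute_base_ofTrue (k : K) (y : Coprod A D) :
    Commute (PushoutI.base (diagram K A B D) (k, 1)) (ofTrue (1, y)) := by
  rw [← ofTrue_inl, map_one]
  exact (MonoidHom.commute_inl_inr k y).map ofTrue

variable (K A B D) in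
def toProdCoprod : P →* K × Coprod (Coprod A B) D :=
  PushoutI.lift
    (fun
      | false => (MonoidHom.id K).prodMap Coprod.inl
      | true => (MonoidHom.id K).prodMap (Coprod.lift (Coprod.inl.comp Coprod.inl) Coprod.inr))
    ((MonoidHom.id K).prodMap (Coprod.inl.comp Coprod.inl))
    (by rintro (_ | _) <;> rfl)

theorem toProdCoprod_ofFalse (p : K × Coprod A B) :
    toProdCoprod K A B D (ofFalse p) = (p.1, Coprod.inl p.2) :=
  PushoutI.lift_of ..

theorem toProdCoprod_ofTrue (p : K × Coprod A D) :
    toProdCoprod K A B D (ofTrue p) =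
      (p.1, Coprod.lift (Coprod.inl.comp Coprod.inl) Coprod.inr p.2) :=
  PushoutI.lift_of ..

theorem toProdCoprod_base (p : K × A) :
    toProdCoprod K A B D (PushoutI.base _ p) = (p.1, Coprod.inl (Coprod.inl p.2)) :=
  PushoutI.lift_base ..

variable (K A B D) in
def ofCoprod : Coprod (Coprod A B) D →* P :=
  Coprod.lift
    (Coprod.lift ((PushoutI.base _).comp (MonoidHom.inr K A))
      (ofFalse.comp ((MonoidHom.inr K _).comp Coprod.inr)))
    (ofTrue.comp ((MonoidHom.inr K _).comp Coprod.inr))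

theorem ofCoprod_comp_inl :
    (ofCoprod K A B D).comp Coprod.inl = ofFalse.comp (MonoidHom.inr K _) := by
  ext <;> simp [ofCoprod, ofFalse_inl]

theorem ofCoprod_comp_lift :
    (ofCoprod K A B D).comp (Coprod.lift (Coprod.inl.comp Coprod.inl) Coprod.inr) =
      ofTrue.comp (MonoidHom.inr K _) := by
  ext <;> simp [ofCoprod, ofTrue_inl]

theorem toProdCoprod_comp_ofCoprod :
    (toProdCoprod K A B D).comp (ofCoprod K A B D) = MonoidHom.inr K _ := by
  ext <;> simp [ofCoprod, toProdCoprod_ofFalse, toProdCoprod_ofTrue, toProdCoprod_base]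

theorem commute_base_ofCoprod (k : K) (w : Coprod (Coprod A B) D) :
    Commute (PushoutI.base (diagram K A B D) (k, 1)) (ofCoprod K A B D w) := by
  induction w using Coprod.induction_on with
  | inl x =>
    rw [← MonoidHom.comp_apply, ofCoprod_comp_inl]
    exact commute_base_ofFalse k x
  | inr d => exact commute_base_ofTrue k (Coprod.inr d)
  | mul w w' hw hw' => rw [map_mul]; exact hw.mul_right hw'

variable (K A B D) in
def ofProdCoprod : K × Coprod (Coprod A B) D →* P :=
  ((PushoutI.base _).comp (MonoidHom.inl K A)).noncommCoprod (ofCoprod K A B D)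
    commute_base_ofCoprod

theorem ofProdCoprod_apply (k : K) (w : Coprod (Coprod A B) D) :
    ofProdCoprod K A B D (k, w) = PushoutI.base _ (k, 1) * ofCoprod K A B D w :=
  rfl

theorem ofProdCoprod_toProdCoprod_ofFalse (p : K × Coprod A B) :
    ofProdCoprod K A B D (toProdCoprod K A B D (ofFalse p)) = ofFalse p := by
  rw [toProdCoprod_ofFalse, ofProdCoprod_apply, ← MonoidHom.comp_apply (ofCoprod K A B D),
    ofCoprod_comp_inl, ofFalse_mk]
  rfl

theorem ofProdCoprod_toProdCoprod_ofTrue (p : K × Coprod A D) :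
    ofProdCoprod K A B D (toProdCoprod K A B D (ofTrue p)) = ofTrue p := by
  rw [toProdCoprod_ofTrue, ofProdCoprod_apply, ← MonoidHom.comp_apply (ofCoprod K A B D),
    ofCoprod_comp_lift, ofTrue_mk]
  rfl

theorem ofProdCoprod_toProdCoprod_base (p : K × A) :
    ofProdCoprod K A B D (toProdCoprod K A B D (PushoutI.base _ p)) = PushoutI.base _ p := by
  simp [toProdCoprod_base, ofProdCoprod_apply, ofCoprod, ← map_mul]

theorem ofProdCoprod_comp_toProdCoprod :
    (ofProdCoprod K A B D).comp (toProdCoprod K A B D) = MonoidHom.id _ := by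
  refine PushoutI.hom_ext (fun i => ?_) (MonoidHom.ext ofProdCoprod_toProdCoprod_base)
  cases i
  exacts [MonoidHom.ext ofProdCoprod_toProdCoprod_ofFalse,
    MonoidHom.ext ofProdCoprod_toProdCoprod_ofTrue]

theorem toProdCoprod_comp_ofProdCoprod :
    (toProdCoprod K A B D).comp (ofProdCoprod K A B D) = MonoidHom.id _ := by
  refine MonoidHom.ext fun ⟨k, w⟩ => ?_
  rw [MonoidHom.comp_apply, ofProdCoprod_apply, map_mul, toProdCoprod_base,
    ← MonoidHom.comp_apply (toProdCoprod K A B D), toProdCoprod_comp_ofCoprod]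
  simp

variable (K A B D) in
def equivProdCoprod : P ≃* K × Coprod (Coprod A B) D :=
  (toProdCoprod K A B D).toMulEquiv (ofProdCoprod K A B D)
    ofProdCoprod_comp_toProdCoprod toProdCoprod_comp_ofProdCoprod

end ProdInlPushout

/-- The pushout of two copies of `f`, i.e. the amalgamated free product
`(C₂ × (ℤ * C₂)) *_{C₂ × ℤ} (C₂ × (ℤ * C₂))` with both amalgamating maps `f`,
is isomorphic to `C₂ × (ℤ * C₂ * C₂)`. -/
theorem stmt6 :
    Nonempty
      (Monoid.PushoutI (pairHom f f) ≃*
        C2 × Monoid.Coprod (Monoid.Coprod Z C2) C2) :=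
  ⟨ProdInlPushout.equivProdCoprod C2 Z C2 C2⟩
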